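/- arXiv:2102.09132 — 2 statements merged into one kernel-verified Lean document; each statement's English description precedes it below -/
import Mathlib

section
/- If x* is an optimal {0,1}-valued solution of the linear program (LP) and (u*, τ*) is an optimal solution of its dual (D), then setting p*^m = Σ_r Σ_{b∋m} x*_r(b)·v_r^m(b) − u*^m for each rider m makes (x*, p*, τ*) a market equilibrium. Conversely, for any market equilibrium (x*, p*, τ*), the trip vector x* is an optimal solution of (LP) and the pair (u*, τ*), where u* is the induced utility vector, is an optimal solution of (D). -/
/-!
Weak duality and complementary slackness identify market equilibria with pairs of optimal
solutions of (LP) and (D): individual rationality and stability say that the utilities and tolls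
are dual feasible, while budget balance, the zero payment of unmatched riders and market clearing
are exactly complementary slackness for an integral `x`. The one nontrivial input is LP strong
duality, obtained from Farkas' lemma (hyperplane separation from a closed cone) once finitely
generated cones are known to be closed, which follows from Carathéodory's theorem for cones.
-/

open Classical
noncomputable section

/-- Data of the autonomous carpooling market of Ostrovsky–Schwarz:
an abstract finite edge set `E` with integer capacities and positive travel times,
a finite route set `R` (each route given by its finite set of edges),
a finite set of riders `M`, a car capacity `A`, and rider preference parameters
`α` (value of arriving), `β` (value of time), `γ` (carpool disutility, depending on
group size) and a per-rider per-unit-time operation cost `δ`. -/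
structure CarpoolMarket where
  /-- edges of the network -/
  E : Type
  /-- routes of the network (origin–destination paths) -/
  R : Type
  /-- riders -/
  M : Type
  [fintypeE : Fintype E]
  [fintypeR : Fintype R]
  [fintypeM : Fintype M]
  [decEqM : DecidableEq M]
  /-- integer edge capacities `q_e ≥ 1` -/
  q : E → ℕ
  q_pos : ∀ e, 1 ≤ q e
  /-- edge travel times `t_e > 0` -/
  t : E → ℝ
  t_pos : ∀ e, 0 < t e
  /-- the (finite) set of edges of each route -/
  edges : R → Finset E
  /-- car capacity -/
  A : ℕ
  A_pos : 1 ≤ A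
  /-- value of arriving at the destination -/
  α : M → ℝ
  /-- value of time -/
  β : M → ℝ
  /-- carpool disutility of rider `m` for a group of size `d`, per unit travel time -/
  γ : M → ℕ → ℝ
  γ_nonneg : ∀ m d, 1 ≤ d → d ≤ A → 0 ≤ γ m d
  γ_one : ∀ m, γ m 1 = 0
  /-- the marginal disutility `γ(d) - γ(d-1)` is nondecreasing in `d` -/
  γ_incr : ∀ m d, 2 ≤ d → d < A → γ m d - γ m (d - 1) ≤ γ m (d + 1) - γ m d
  /-- cost of driving one rider for one unit of travel time -/
  δ : ℝ
  δ_nonneg : 0 ≤ δ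

attribute [instance] CarpoolMarket.fintypeE CarpoolMarket.fintypeR
  CarpoolMarket.fintypeM CarpoolMarket.decEqM

namespace CarpoolMarket

variable (c : CarpoolMarket)

/-- travel time of a route: the sum of travel times of its edges -/
def routeTime (r : c.R) : ℝ := ∑ e ∈ c.edges r, c.t e

/-- the set `B` of feasible rider groups: nonempty subsets of riders of size at most `A` -/
def Groups : Finset (Finset c.M) :=
  Finset.univ.filter fun b => b.Nonempty ∧ b.card ≤ c.A

/-- rider `m`'s value `v_r^m(b)` of the trip `(b, r)` -/
def riderValue (m : c.M) (b : Finset c.M) (r : c.R) : ℝ :=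
  c.α m - c.β m * c.routeTime r - c.γ m b.card * c.routeTime r

/-- cost `c_r(b) = δ |b| t_r` of the trip `(b, r)` -/
def tripCost (b : Finset c.M) (r : c.R) : ℝ := c.δ * (b.card : ℝ) * c.routeTime r

/-- social value `V_r(b)` of the trip `(b, r)` -/
def V (b : Finset c.M) (r : c.R) : ℝ :=
  (∑ m ∈ b, c.riderValue m b r) - c.tripCost b r

/-- load that a (fractional) trip vector `x` places on edge `e` -/
def edgeLoad (x : Finset c.M → c.R → ℝ) (e : c.E) : ℝ :=
  ∑ r ∈ Finset.univ.filter (fun r => e ∈ c.edges r), ∑ b ∈ c.Groups, x b r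

/-- feasible solutions of the linear-programming relaxation (LP) -/
def LPFeasible (x : Finset c.M → c.R → ℝ) : Prop :=
  (∀ b r, 0 ≤ x b r) ∧
  (∀ b r, b ∉ c.Groups → x b r = 0) ∧
  (∀ m : c.M, (∑ r : c.R, ∑ b ∈ c.Groups.filter (fun b => m ∈ b), x b r) ≤ 1) ∧
  (∀ e : c.E, c.edgeLoad x e ≤ (c.q e : ℝ))

/-- social welfare `S(x) = ∑_{b,r} V_r(b) x_r(b)` -/
def welfare (x : Finset c.M → c.R → ℝ) : ℝ :=
  ∑ b ∈ c.Groups, ∑ r : c.R, c.V b r * x b r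

/-- a vector has all its entries in `{0,1}` -/
def IsBinary (x : Finset c.M → c.R → ℝ) : Prop := ∀ b r, x b r = 0 ∨ x b r = 1

/-- optimal solutions of (LP) -/
def LPOptimal (x : Finset c.M → c.R → ℝ) : Prop :=
  c.LPFeasible x ∧ ∀ y, c.LPFeasible y → c.welfare y ≤ c.welfare x

/-- feasible `{0,1}`-valued trip vectors -/
def TripFeasible (x : Finset c.M → c.R → ℝ) : Prop :=
  c.IsBinary x ∧ c.LPFeasible x

/-- utility of rider `m` under the outcome `(x, p)`:
`u^m = ∑_r ∑_{b ∋ m} v_r^m(b) x_r(b) - p^m` -/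
def utility (x : Finset c.M → c.R → ℝ) (p : c.M → ℝ) (m : c.M) : ℝ :=
  (∑ r : c.R, ∑ b ∈ c.Groups.filter (fun b => m ∈ b), c.riderValue m b r * x b r) - p m

/-- total toll collected on a route -/
def routeToll (τ : c.E → ℝ) (r : c.R) : ℝ := ∑ e ∈ c.edges r, τ e

/-- A market equilibrium: a feasible `{0,1}` trip vector, payments and nonnegative tolls
satisfying individual rationality, stability, budget balance and market clearing. -/
def IsEquilibrium (x : Finset c.M → c.R → ℝ) (p : c.M → ℝ) (τ : c.E → ℝ) : Prop :=
  c.TripFeasible x ∧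
  (∀ e, 0 ≤ τ e) ∧
  -- individual rationality
  (∀ m, 0 ≤ c.utility x p m) ∧
  -- stability
  (∀ b ∈ c.Groups, ∀ r : c.R,
      c.V b r - c.routeToll τ r ≤ ∑ m ∈ b, c.utility x p m) ∧
  -- budget balance for organized trips
  (∀ b ∈ c.Groups, ∀ r : c.R, x b r = 1 →
      ∑ m ∈ b, p m = c.routeToll τ r + c.tripCost b r) ∧
  -- riders belonging to no organized trip pay nothing
  (∀ m : c.M, (∀ b r, m ∈ b → x b r = 0) → p m = 0) ∧
  -- market clearing
  (∀ e : c.E, c.edgeLoad x e < (c.q e : ℝ) → τ e = 0)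

end CarpoolMarket

/-- The dual program (D): minimize `∑_m u^m + ∑_e q_e τ_e` subject to
`∑_{m∈b} u^m + ∑_{e∈r} τ_e ≥ V_r(b)` and `u, τ ≥ 0`. -/
def CarpoolMarket.DualFeasible (c : CarpoolMarket) (u : c.M → ℝ) (τ : c.E → ℝ) : Prop :=
  (∀ m, 0 ≤ u m) ∧ (∀ e, 0 ≤ τ e) ∧
  (∀ b ∈ c.Groups, ∀ r : c.R, c.V b r ≤ (∑ m ∈ b, u m) + c.routeToll τ r)

/-- objective of the dual program (D) -/
def CarpoolMarket.dualObj (c : CarpoolMarket) (u : c.M → ℝ) (τ : c.E → ℝ) : ℝ :=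
  (∑ m : c.M, u m) + ∑ e : c.E, (c.q e : ℝ) * τ e

/-- optimal solutions of the dual program (D) -/
def CarpoolMarket.DualOptimal (c : CarpoolMarket) (u : c.M → ℝ) (τ : c.E → ℝ) : Prop :=
  c.DualFeasible u τ ∧ ∀ u' τ', c.DualFeasible u' τ' → c.dualObj u τ ≤ c.dualObj u' τ'

namespace PointedCone

open Function Set

section Caratheodory

variable {ι F : Type*} [Fintype ι] [AddCommGroup F] [Module ℝ F]

lemma mem_hull_range_iff {g : ι → F} {x : F} :
    x ∈ hull ℝ (range g) ↔ ∃ c : ι → ℝ, 0 ≤ c ∧ ∑ i, c i • g i = x := by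
  rw [Submodule.mem_span_range_iff_exists_fun]
  exact ⟨fun ⟨c, hc⟩ => ⟨fun i => c i, fun i => (c i).2, hc⟩,
    fun ⟨c, hc0, hc⟩ => ⟨fun i => ⟨c i, hc0 i⟩, hc⟩⟩

lemma exists_relation_pos_of_not_linearIndepOn {g : ι → F} {s : Set ι}
    (h : ¬LinearIndepOn ℝ g s) :
    ∃ D : ι → ℝ, support D ⊆ s ∧ ∑ i, D i • g i = 0 ∧ ∃ j, 0 < D j := by
  simp only [linearIndepOn_iff'', not_forall, exists_prop] at h
  obtain ⟨t, D, hts, hDt, hDsum, j, -, hDj⟩ := h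
  have hsupp : support D ⊆ s := fun i hi => hts (by_contra fun hit => hi (hDt i hit))
  have hsum : ∑ i, D i • g i = 0 := by
    rw [← hDsum, ← Finset.sum_subset t.subset_univ fun i _ hit => by rw [hDt i hit, zero_smul]]
  rcases lt_or_gt_of_ne hDj with hneg | hpos
  · exact ⟨-D, by rwa [support_neg], by simp [neg_smul, hsum], j, by simpa using hneg⟩
  · exact ⟨D, hsupp, hsum, j, hpos⟩

/-- Moving `c` against a relation among the active generators, as far as nonnegativity allows,
kills at least one coefficient. -/
lemma exists_nonneg_combination_support_ssubset {g : ι → F} {c : ι → ℝ} (hc : 0 ≤ c)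
    (hli : ¬LinearIndepOn ℝ g (support c)) :
    ∃ c' : ι → ℝ, 0 ≤ c' ∧ ∑ i, c' i • g i = ∑ i, c i • g i ∧ support c' ⊂ support c := by
  obtain ⟨D, hDc, hDsum, j, hDj⟩ := exists_relation_pos_of_not_linearIndepOn hli
  obtain ⟨k, hk, hkmin⟩ := Finset.exists_min_image (Finset.univ.filter (0 < D ·))
    (fun i => c i / D i) ⟨j, by simpa using hDj⟩
  have hDk : 0 < D k := (Finset.mem_filter.mp hk).2
  set t := c k / D k
  have ht : 0 ≤ t := div_nonneg (hc k) hDk.le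
  refine ⟨c - t • D, fun i => ?_, ?_, ?_⟩
  · simp only [Pi.zero_apply, Pi.sub_apply, Pi.smul_apply, smul_eq_mul]
    rcases lt_or_ge 0 (D i) with hDi | hDi
    · have := hkmin i (by simpa using hDi)
      rw [le_div_iff₀ hDi] at this
      linarith
    · nlinarith [show 0 ≤ c i from hc i, mul_nonneg ht (neg_nonneg.mpr hDi)]
  · simp [sub_smul, mul_smul, Finset.sum_sub_distrib, ← Finset.smul_sum, hDsum]
  · refine (ssubset_iff_of_subset fun i hi => ?_).mpr ⟨k, hDc hDk.ne', ?_⟩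
    · by_contra hci
      have hDi : D i = 0 := by_contra fun h => hci (hDc h)
      exact hci (by simpa [hDi] using hi)
    · simp [t, hDk.ne']

/-- Carathéodory's theorem for cones. -/
lemma exists_nonneg_combination_linearIndepOn (g : ι → F) {c : ι → ℝ} (hc : 0 ≤ c) :
    ∃ d : ι → ℝ, 0 ≤ d ∧ ∑ i, d i • g i = ∑ i, c i • g i ∧ LinearIndepOn ℝ g (support d) := by
  induction hn : (support c).ncard using Nat.strong_induction_on generalizing c with
  | _ n ih =>
    by_cases hli : LinearIndepOn ℝ g (support c)
    · exact ⟨c, hc, rfl, hli⟩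
    obtain ⟨c', hc', hsum, hsub⟩ := exists_nonneg_combination_support_ssubset hc hli
    obtain ⟨d, hd, hdsum, hdli⟩ := ih _ (hn ▸ ncard_lt_ncard hsub (toFinite _)) hc' rfl
    exact ⟨d, hd, hdsum.trans hsum, hdli⟩

lemma hull_range_eq_iUnion_linearIndepOn (g : ι → F) :
    hull ℝ (range g) = ⋃ (s : Set ι) (_ : LinearIndepOn ℝ g s), (hull ℝ (g '' s) : Set F) := by
  ext x
  simp only [SetLike.mem_coe, mem_iUnion, exists_prop]
  constructor
  · intro hx
    obtain ⟨c, hc, rfl⟩ := mem_hull_range_iff.mp hx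
    obtain ⟨d, hd, hdc, hli⟩ := exists_nonneg_combination_linearIndepOn g hc
    refine ⟨support d, hli, hdc ▸ Submodule.sum_mem _ fun i _ => ?_⟩
    by_cases hdi : d i = 0
    · simp [hdi]
    · have hgi : g i ∈ hull ℝ (g '' support d) := subset_hull ⟨i, hdi, rfl⟩
      exact Submodule.smul_mem _ ⟨d i, hd i⟩ hgi
  · rintro ⟨s, -, hx⟩
    exact Submodule.span_mono (image_subset_range g s) hx

end Caratheodory

section Closed

variable {ι F : Type*} [Fintype ι] [AddCommGroup F] [Module ℝ F] [TopologicalSpace F]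
  [IsTopologicalAddGroup F] [ContinuousSMul ℝ F] [T2Space F]

lemma isClosed_hull_range_of_linearIndependent {g : ι → F} (hg : LinearIndependent ℝ g) :
    IsClosed (hull ℝ (range g) : Set F) := by
  have hcone : (hull ℝ (range g) : Set F) = Fintype.linearCombination ℝ g '' Ici 0 := by
    ext x
    simp [mem_hull_range_iff, Fintype.linearCombination_apply]
  rw [hcone]
  refine (LinearMap.isClosedEmbedding_of_injective ?_).isClosedMap _ isClosed_Ici
  exact LinearMap.ker_eq_bot.mpr (linearIndependent_iff_injective_fintypeLinearCombination.mp hg)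

theorem isClosed_hull_range (g : ι → F) : IsClosed (hull ℝ (range g) : Set F) := by
  rw [hull_range_eq_iUnion_linearIndepOn]
  refine isClosed_iUnion_of_finite fun s => isClosed_iUnion_of_finite fun hs => ?_
  rw [image_eq_range]
  exact isClosed_hull_range_of_linearIndependent hs

/-- Farkas' lemma for finitely generated cones. -/
theorem exists_strongDual_of_notMem_hull_range [LocallyConvexSpace ℝ F] (g : ι → F) {x : F}
    (hx : x ∉ hull ℝ (range g)) :
    ∃ f : StrongDual ℝ F, (∀ i, 0 ≤ f (g i)) ∧ f x < 0 := by
  let C : ProperCone ℝ F := { toSubmodule := hull ℝ (range g), isClosed' := isClosed_hull_range g }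
  obtain ⟨f, hfC, hfx⟩ := ProperCone.hyperplane_separation_point C hx
  exact ⟨f, fun i => hfC (g i) (subset_hull ⟨i, rfl⟩), hfx⟩

end Closed

end PointedCone

lemma LinearMap.apply_prod_eq_dotProduct_add {ι : Type*} [Fintype ι] [DecidableEq ι]
    (f : ((ι → ℝ) × ℝ) →ₗ[ℝ] ℝ) (v : ι → ℝ) (a : ℝ) :
    f (v, a) = v ⬝ᵥ (fun i => f (Pi.single i 1, 0)) + a * f (0, 1) := by
  have hva : (v, a) = ∑ i, v i • ((Pi.single i 1 : ι → ℝ), (0 : ℝ)) + a • (0, 1) := by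
    ext j
    · simp [Prod.fst_sum, Finset.sum_apply, Pi.single_apply]
    · simp [Prod.snd_sum]
  rw [hva, map_add, map_sum]
  simp only [map_smul, smul_eq_mul, dotProduct]

namespace Matrix

variable {ι κ : Type*} [Fintype ι] (A : Matrix κ ι ℝ) (b : κ → ℝ) (c : ι → ℝ)

lemma dotProduct_sub_dotProduct_eq [Fintype κ] (x : ι → ℝ) (y : κ → ℝ) :
    y ⬝ᵥ b - c ⬝ᵥ x = y ⬝ᵥ (b - A *ᵥ x) + (y ᵥ* A - c) ⬝ᵥ x := by
  rw [dotProduct_sub, sub_dotProduct, dotProduct_mulVec]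
  ring

variable {A b c} {x : ι → ℝ} {y : κ → ℝ}

lemma dotProduct_le_of_feasible [Fintype κ] (hx0 : 0 ≤ x) (hx : A *ᵥ x ≤ b) (hy0 : 0 ≤ y)
    (hy : c ≤ y ᵥ* A) : c ⬝ᵥ x ≤ y ⬝ᵥ b := by
  have := dotProduct_sub_dotProduct_eq A b c x y
  have h1 : 0 ≤ y ⬝ᵥ (b - A *ᵥ x) := dotProduct_nonneg_of_nonneg hy0 (sub_nonneg.mpr hx)
  have h2 : 0 ≤ (y ᵥ* A - c) ⬝ᵥ x := dotProduct_nonneg_of_nonneg (sub_nonneg.mpr hy) hx0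
  linarith

lemma dotProduct_eq_iff_complementarySlackness [Fintype κ] (hx0 : 0 ≤ x) (hx : A *ᵥ x ≤ b)
    (hy0 : 0 ≤ y) (hy : c ≤ y ᵥ* A) :
    c ⬝ᵥ x = y ⬝ᵥ b ↔
      (∀ k, y k * (b - A *ᵥ x) k = 0) ∧ ∀ i, (y ᵥ* A - c) i * x i = 0 := by
  have h1 : ∀ k ∈ Finset.univ, 0 ≤ y k * (b - A *ᵥ x) k :=
    fun k _ => mul_nonneg (hy0 k) (sub_nonneg.mpr (hx k))
  have h2 : ∀ i ∈ Finset.univ, 0 ≤ (y ᵥ* A - c) i * x i :=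
    fun i _ => mul_nonneg (sub_nonneg.mpr (hy i)) (hx0 i)
  rw [eq_comm, ← sub_eq_zero, dotProduct_sub_dotProduct_eq A b c x y,
    dotProduct, dotProduct, add_eq_zero_iff_of_nonneg (Finset.sum_nonneg h1)
      (Finset.sum_nonneg h2), Finset.sum_eq_zero_iff_of_nonneg h1,
    Finset.sum_eq_zero_iff_of_nonneg h2]
  simp

lemma dotProduct_le_of_optimal (hx0 : 0 ≤ x) (hx : A *ᵥ x ≤ b)
    (hopt : ∀ x', 0 ≤ x' → A *ᵥ x' ≤ b → c ⬝ᵥ x' ≤ c ⬝ᵥ x) {z : ι → ℝ} {μ : ℝ}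
    (hz0 : 0 ≤ z) (hμ : 0 ≤ μ) (hz : A *ᵥ z ≤ μ • b) : c ⬝ᵥ z ≤ μ * c ⬝ᵥ x := by
  have hμ1 : 0 < 1 + μ := by linarith
  -- `(x + z) / (1 + μ)` is feasible
  have h := hopt ((1 + μ)⁻¹ • (x + z)) (smul_nonneg (inv_nonneg.mpr hμ1.le) (add_nonneg hx0 hz0))
    (by
      rw [mulVec_smul, mulVec_add, inv_smul_le_iff_of_pos hμ1, add_smul, one_smul]
      exact add_le_add hx hz)
  rw [dotProduct_smul, dotProduct_add, smul_eq_mul, inv_mul_le_iff₀ hμ1] at h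
  linarith

/-- Strong LP duality. -/
theorem exists_dual_le_of_optimal [Fintype κ] (hx0 : 0 ≤ x) (hx : A *ᵥ x ≤ b)
    (hopt : ∀ x', 0 ≤ x' → A *ᵥ x' ≤ b → c ⬝ᵥ x' ≤ c ⬝ᵥ x) :
    ∃ y : κ → ℝ, 0 ≤ y ∧ c ≤ y ᵥ* A ∧ y ⬝ᵥ b ≤ c ⬝ᵥ x := by
  classical
  let g : κ ⊕ ι ⊕ Unit → (ι → ℝ) × ℝ :=
    Sum.elim (fun k => (-A k, b k)) (Sum.elim (fun i => (Pi.single i 1, 0)) fun _ => (0, 1))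
  -- `(-c, c ⬝ᵥ x)` lies in the cone spanned by `g` iff some `y ≥ 0` has `c ≤ y ᵥ* A` and
  -- `y ⬝ᵥ b ≤ c ⬝ᵥ x`; a separating functional is a direction `z` with slack `μ` improving on `x`.
  by_cases hmem : (-c, c ⬝ᵥ x) ∈ PointedCone.hull ℝ (Set.range g)
  · obtain ⟨w, hw0, hw⟩ := PointedCone.mem_hull_range_iff.mp hmem
    refine ⟨fun k => w (Sum.inl k), fun k => hw0 _, fun i => ?_, ?_⟩
    · have hi := congrArg (fun p => p.1 i) hw
      simp [g, Fintype.sum_sum_type, Prod.fst_sum, Finset.sum_apply, Pi.single_apply] at hi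
      have : 0 ≤ w (Sum.inr (Sum.inl i)) := hw0 _
      simp only [vecMul, dotProduct]
      linarith
    · have hlast := congrArg Prod.snd hw
      simp [g, Fintype.sum_sum_type, Prod.snd_sum] at hlast
      have : 0 ≤ w (Sum.inr (Sum.inr ())) := hw0 _
      simp only [dotProduct] at hlast ⊢
      linarith
  · exfalso
    obtain ⟨f, hfg, hfp⟩ := PointedCone.exists_strongDual_of_notMem_hull_range g hmem
    set z : ι → ℝ := fun i => f (Pi.single i 1, 0)
    set μ := f (0, 1)
    have hf : ∀ v a, f (v, a) = v ⬝ᵥ z + a * μ :=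
      LinearMap.apply_prod_eq_dotProduct_add (f : ((ι → ℝ) × ℝ) →ₗ[ℝ] ℝ)
    have hz : A *ᵥ z ≤ μ • b := fun k => by
      have := hfg (Sum.inl k)
      simp only [g, Sum.elim_inl, hf, neg_dotProduct] at this
      simp only [mulVec, Pi.smul_apply, smul_eq_mul]
      linarith
    have hz0 : 0 ≤ z := fun i => hfg (Sum.inr (Sum.inl i))
    have hμ : 0 ≤ μ := hfg (Sum.inr (Sum.inr ()))
    have := dotProduct_le_of_optimal hx0 hx hopt hz0 hμ hz
    simp only [hf, neg_dotProduct] at hfp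
    linarith

end Matrix

lemma Finset.sum_mul_eq_of_apply_eq_one {α : Type*} [DecidableEq α] {s : Finset α}
    {x : α → ℝ} (hx0 : ∀ a ∈ s, 0 ≤ x a) (hx1 : ∑ a ∈ s, x a ≤ 1) {a : α} (ha : a ∈ s)
    (hxa : x a = 1) (g : α → ℝ) : ∑ a' ∈ s, g a' * x a' = g a := by
  rw [← Finset.add_sum_erase s _ ha] at hx1 ⊢
  have hx0' : ∀ a' ∈ s.erase a, 0 ≤ x a' := fun a' ha' => hx0 a' (Finset.mem_of_mem_erase ha')
  have hrest := (Finset.sum_eq_zero_iff_of_nonneg hx0').mp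
    (le_antisymm (by linarith) (Finset.sum_nonneg hx0'))
  rw [hxa, mul_one, Finset.sum_eq_zero fun a' ha' => by rw [hrest a' ha', mul_zero], add_zero]

namespace CarpoolMarket

open Matrix

variable (c : CarpoolMarket)

def riderLoad (x : Finset c.M → c.R → ℝ) (m : c.M) : ℝ :=
  ∑ r : c.R, ∑ b ∈ c.Groups.filter (fun b => m ∈ b), x b r

def riderIncidence : Matrix c.M (c.Groups × c.R) ℝ :=
  Matrix.of fun m i => if m ∈ (i.1 : Finset c.M) then 1 else 0

def edgeIncidence : Matrix c.E (c.Groups × c.R) ℝ :=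
  Matrix.of fun e i => if e ∈ c.edges i.2 then 1 else 0

/-- (LP) in matrix form, with one variable per trip `(b, r)`, `b ∈ B`. -/
def lpMatrix : Matrix (c.M ⊕ c.E) (c.Groups × c.R) ℝ :=
  Matrix.fromRows c.riderIncidence c.edgeIncidence

def lpBound : c.M ⊕ c.E → ℝ := Sum.elim 1 fun e => (c.q e : ℝ)

def lpObjective (i : c.Groups × c.R) : ℝ := c.V i.1 i.2

variable {c}

def toTripVec (x : Finset c.M → c.R → ℝ) (i : c.Groups × c.R) : ℝ := x i.1 i.2

def ofTripVec (z : c.Groups × c.R → ℝ) (b : Finset c.M) (r : c.R) : ℝ :=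
  if h : b ∈ c.Groups then z (⟨b, h⟩, r) else 0

lemma toTripVec_ofTripVec (z : c.Groups × c.R → ℝ) : toTripVec (ofTripVec z) = z := by
  ext ⟨⟨b, hb⟩, r⟩
  simp [toTripVec, ofTripVec, hb]

section Translation

variable (x : Finset c.M → c.R → ℝ) (u : c.M → ℝ) (τ : c.E → ℝ)

lemma riderIncidence_mulVec : c.riderIncidence *ᵥ toTripVec x = c.riderLoad x := by
  ext m
  rw [riderLoad, Matrix.mulVec, dotProduct, Fintype.sum_prod_type, Finset.sum_comm]
  refine Finset.sum_congr rfl fun r _ => ?_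
  rw [Finset.sum_filter, ← Finset.sum_coe_sort c.Groups]
  simp [riderIncidence, toTripVec]

lemma edgeIncidence_mulVec : c.edgeIncidence *ᵥ toTripVec x = c.edgeLoad x := by
  ext e
  rw [edgeLoad, Matrix.mulVec, dotProduct, Fintype.sum_prod_type, Finset.sum_comm,
    Finset.sum_filter]
  refine Finset.sum_congr rfl fun r _ => ?_
  rw [← Finset.sum_coe_sort c.Groups]
  split_ifs with he <;> simp [edgeIncidence, toTripVec, he]

lemma vecMul_riderIncidence (i : c.Groups × c.R) :
    (u ᵥ* c.riderIncidence) i = ∑ m ∈ (i.1 : Finset c.M), u m := by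
  simp [riderIncidence, Matrix.vecMul, dotProduct, Finset.sum_ite_mem]

lemma vecMul_edgeIncidence (i : c.Groups × c.R) :
    (τ ᵥ* c.edgeIncidence) i = c.routeToll τ i.2 := by
  simp [edgeIncidence, routeToll, Matrix.vecMul, dotProduct, Finset.sum_ite_mem]

lemma lpObjective_dotProduct : c.lpObjective ⬝ᵥ toTripVec x = c.welfare x := by
  rw [welfare, dotProduct, Fintype.sum_prod_type, ← Finset.sum_coe_sort c.Groups]
  rfl

lemma dotProduct_lpBound : Sum.elim u τ ⬝ᵥ c.lpBound = c.dualObj u τ := by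
  simp [lpBound, dualObj, dotProduct, Fintype.sum_sum_type, mul_comm]

lemma lpMatrix_mulVec : c.lpMatrix *ᵥ toTripVec x = Sum.elim (c.riderLoad x) (c.edgeLoad x) := by
  rw [lpMatrix, Matrix.fromRows_mulVec, riderIncidence_mulVec, edgeIncidence_mulVec]

lemma vecMul_lpMatrix (i : c.Groups × c.R) :
    (Sum.elim u τ ᵥ* c.lpMatrix) i = ∑ m ∈ (i.1 : Finset c.M), u m + c.routeToll τ i.2 := by
  rw [lpMatrix, Matrix.vecMul_fromRows, Sum.elim_comp_inl, Sum.elim_comp_inr, Pi.add_apply,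
    vecMul_riderIncidence, vecMul_edgeIncidence]

end Translation

variable {x : Finset c.M → c.R → ℝ} {u : c.M → ℝ} {τ : c.E → ℝ}

lemma LPFeasible.toTripVec_nonneg_and_mulVec_le (hx : c.LPFeasible x) :
    0 ≤ toTripVec x ∧ c.lpMatrix *ᵥ toTripVec x ≤ c.lpBound := by
  refine ⟨fun i => hx.1 _ _, ?_⟩
  rw [lpMatrix_mulVec]
  rintro (m | e)
  exacts [hx.2.2.1 m, hx.2.2.2 e]

lemma lpFeasible_ofTripVec {z : c.Groups × c.R → ℝ} (hz0 : 0 ≤ z)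
    (hz : c.lpMatrix *ᵥ z ≤ c.lpBound) :
    c.LPFeasible (ofTripVec z) := by
  rw [← toTripVec_ofTripVec z, lpMatrix_mulVec] at hz
  refine ⟨fun b r => ?_, fun b r hb => dif_neg hb, fun m => hz (Sum.inl m),
    fun e => hz (Sum.inr e)⟩
  unfold ofTripVec
  split_ifs
  exacts [hz0 _, le_rfl]

lemma dualFeasible_iff :
    c.DualFeasible u τ ↔ 0 ≤ Sum.elim u τ ∧ c.lpObjective ≤ Sum.elim u τ ᵥ* c.lpMatrix := by
  simp only [DualFeasible, Pi.le_def, Sum.forall, Sum.elim_inl, Sum.elim_inr, Pi.zero_apply,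
    Prod.forall, Subtype.forall, vecMul_lpMatrix, lpObjective, and_assoc]

lemma welfare_le_dualObj (hx : c.LPFeasible x) (hd : c.DualFeasible u τ) :
    c.welfare x ≤ c.dualObj u τ := by
  obtain ⟨hx0, hxA⟩ := hx.toTripVec_nonneg_and_mulVec_le
  obtain ⟨hy0, hyA⟩ := dualFeasible_iff.mp hd
  simpa only [lpObjective_dotProduct, dotProduct_lpBound] using
    dotProduct_le_of_feasible hx0 hxA hy0 hyA

lemma exists_dualFeasible_dualObj_le (hx : c.LPOptimal x) :
    ∃ u τ, c.DualFeasible u τ ∧ c.dualObj u τ ≤ c.welfare x := by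
  obtain ⟨hx0, hxA⟩ := hx.1.toTripVec_nonneg_and_mulVec_le
  have hopt : ∀ z, 0 ≤ z → c.lpMatrix *ᵥ z ≤ c.lpBound →
      c.lpObjective ⬝ᵥ z ≤ c.lpObjective ⬝ᵥ toTripVec x := fun z hz0 hz => by
    rw [← toTripVec_ofTripVec z, lpObjective_dotProduct, lpObjective_dotProduct]
    exact hx.2 _ (lpFeasible_ofTripVec hz0 hz)
  obtain ⟨y, hy0, hyA, hyb⟩ := exists_dual_le_of_optimal hx0 hxA hopt
  rw [← Sum.elim_comp_inl_inr y] at hy0 hyA hyb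
  refine ⟨y ∘ Sum.inl, y ∘ Sum.inr, dualFeasible_iff.mpr ⟨hy0, hyA⟩, ?_⟩
  rwa [dotProduct_lpBound, lpObjective_dotProduct] at hyb

def ComplementarySlack (x : Finset c.M → c.R → ℝ) (u : c.M → ℝ) (τ : c.E → ℝ) : Prop :=
  (∀ m, u m * (1 - c.riderLoad x m) = 0) ∧
  (∀ e, τ e * (c.q e - c.edgeLoad x e) = 0) ∧
  (∀ b ∈ c.Groups, ∀ r, (∑ m ∈ b, u m + c.routeToll τ r - c.V b r) * x b r = 0)

lemma LPFeasible.welfare_eq_dualObj_iff (hx : c.LPFeasible x) (hd : c.DualFeasible u τ) :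
    c.welfare x = c.dualObj u τ ↔ c.ComplementarySlack x u τ := by
  obtain ⟨hx0, hxA⟩ := hx.toTripVec_nonneg_and_mulVec_le
  obtain ⟨hy0, hyA⟩ := dualFeasible_iff.mp hd
  rw [← lpObjective_dotProduct, ← dotProduct_lpBound,
    dotProduct_eq_iff_complementarySlackness hx0 hxA hy0 hyA, ComplementarySlack, lpMatrix_mulVec]
  simp only [Sum.forall, Prod.forall, Subtype.forall, Pi.sub_apply, Sum.elim_inl, Sum.elim_inr,
    vecMul_lpMatrix, lpObjective, lpBound, Pi.one_apply, toTripVec, and_assoc]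

lemma LPOptimal.welfare_eq_dualObj (hx : c.LPOptimal x) (hd : c.DualOptimal u τ) :
    c.welfare x = c.dualObj u τ := by
  obtain ⟨u₀, τ₀, hd₀, hle⟩ := exists_dualFeasible_dualObj_le hx
  exact le_antisymm (welfare_le_dualObj hx.1 hd.1) ((hd.2 u₀ τ₀ hd₀).trans hle)

lemma LPFeasible.optimal_of_welfare_eq_dualObj (hx : c.LPFeasible x) (hd : c.DualFeasible u τ)
    (h : c.welfare x = c.dualObj u τ) : c.LPOptimal x ∧ c.DualOptimal u τ :=
  ⟨⟨hx, fun _ hy => h ▸ welfare_le_dualObj hy hd⟩,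
    ⟨hd, fun _ _ hd' => h ▸ welfare_le_dualObj hx hd'⟩⟩

lemma sum_trips_mul_eq_of_eq_one (hx : c.LPFeasible x) {b : Finset c.M} {m : c.M} {r : c.R}
    (hb : b ∈ c.Groups) (hm : m ∈ b) (hxb : x b r = 1) (g : Finset c.M → c.R → ℝ) :
    ∑ r', ∑ b' ∈ c.Groups.filter (fun b => m ∈ b), g b' r' * x b' r' = g b r := by
  set trips := (Finset.univ : Finset c.R) ×ˢ c.Groups.filter (fun b => m ∈ b)
  have hload : ∑ p ∈ trips, x p.2 p.1 ≤ 1 := by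
    rw [Finset.sum_product' (Finset.univ : Finset c.R) _ fun r' b' => x b' r']
    exact hx.2.2.1 m
  have hmem : (r, b) ∈ trips := by simp [trips, hb, hm]
  rw [← Finset.sum_product' (Finset.univ : Finset c.R) _ fun r' b' => g b' r' * x b' r']
  exact Finset.sum_mul_eq_of_apply_eq_one (fun p _ => hx.1 _ _) hload hmem hxb fun p => g p.2 p.1

lemma sum_trips_eq_zero_of_unmatched {m : c.M} {f : Finset c.M → c.R → ℝ}
    (hf : ∀ b r, m ∈ b → f b r = 0) :
    ∑ r, ∑ b ∈ c.Groups.filter (fun b => m ∈ b), f b r = 0 :=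
  Finset.sum_eq_zero fun r _ => Finset.sum_eq_zero fun b hb => hf b r (Finset.mem_filter.mp hb).2

lemma TripFeasible.matched_or_unmatched (hx : c.TripFeasible x) (m : c.M) :
    (∃ b ∈ c.Groups, ∃ r, m ∈ b ∧ x b r = 1) ∨ ∀ b r, m ∈ b → x b r = 0 := by
  by_contra! h
  obtain ⟨hmatched, b, r, hm, hxb⟩ := h
  by_cases hb : b ∈ c.Groups
  · exact hxb ((hx.1 b r).resolve_right (hmatched b hb r hm))
  · exact hxb (hx.2.2.1 b r hb)

lemma isEquilibrium_of_complementarySlack (hx : c.TripFeasible x) (hd : c.DualFeasible u τ)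
    (hcs : c.ComplementarySlack x u τ) :
    c.IsEquilibrium x
      (fun m => (∑ r : c.R, ∑ b ∈ c.Groups.filter (fun b => m ∈ b), x b r * c.riderValue m b r)
        - u m) τ := by
  obtain ⟨hcs_rider, hcs_edge, hcs_trip⟩ := hcs
  set p : c.M → ℝ := fun m =>
    (∑ r : c.R, ∑ b ∈ c.Groups.filter (fun b => m ∈ b), x b r * c.riderValue m b r) - u m
  have hu : ∀ m, c.utility x p m = u m := fun m => by
    simp only [utility, p, mul_comm, sub_sub_cancel]
  refine ⟨hx, hd.2.1, fun m => hu m ▸ hd.1 m, fun b hb r => ?_, fun b hb r hxb => ?_,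
    fun m hm => ?_, fun e he => ?_⟩
  · simp only [hu]
    linarith [hd.2.2 b hb r]
  · have hp : ∀ m ∈ b, p m = c.riderValue m b r - u m := fun m hm => by
      simp only [p, mul_comm (x _ _)]
      rw [sum_trips_mul_eq_of_eq_one hx.2 hb hm hxb]
    have := hcs_trip b hb r
    rw [hxb, mul_one] at this
    rw [Finset.sum_congr rfl hp, Finset.sum_sub_distrib]
    simp only [V] at this
    linarith
  · have hload : c.riderLoad x m = 0 := sum_trips_eq_zero_of_unmatched hm
    have hum : u m = 0 := by simpa [hload] using hcs_rider m
    simp only [p, hum, sub_zero]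
    exact sum_trips_eq_zero_of_unmatched fun b r hmb => by rw [hm b r hmb, zero_mul]
  · exact (mul_eq_zero.mp (hcs_edge e)).resolve_right (by linarith)

lemma IsEquilibrium.dualFeasible_and_complementarySlack {p : c.M → ℝ} (h : c.IsEquilibrium x p τ) :
    c.DualFeasible (c.utility x p) τ ∧ c.ComplementarySlack x (c.utility x p) τ := by
  obtain ⟨hx, hτ, hIR, hstab, hbudget, hfree, hclear⟩ := h
  refine ⟨⟨hIR, hτ, fun b hb r => by linarith [hstab b hb r]⟩, fun m => ?_, fun e => ?_,
    fun b hb r => ?_⟩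
  · rcases hx.matched_or_unmatched m with ⟨b, hb, r, hm, hxb⟩ | hm
    · have hload : c.riderLoad x m = 1 := by
        simpa [riderLoad] using sum_trips_mul_eq_of_eq_one hx.2 hb hm hxb fun _ _ => 1
      rw [hload, sub_self, mul_zero]
    · rw [utility, sum_trips_eq_zero_of_unmatched fun b r hmb => by rw [hm b r hmb, mul_zero],
        hfree m hm, sub_zero, zero_mul]
  · rcases (hx.2.2.2.2 e).lt_or_eq with hlt | heq
    · rw [hclear e hlt, zero_mul]
    · rw [heq, sub_self, mul_zero]
  · rcases hx.1 b r with hxb | hxb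
    · rw [hxb, mul_zero]
    have hu : ∀ m ∈ b, c.utility x p m = c.riderValue m b r - p m := fun m hm => by
      rw [utility, sum_trips_mul_eq_of_eq_one hx.2 hb hm hxb fun b r => c.riderValue m b r]
    rw [hxb, mul_one, Finset.sum_congr rfl hu, Finset.sum_sub_distrib, hbudget b hb r hxb, V]
    ring

end CarpoolMarket

/-- If `x*` is an optimal `{0,1}`-valued solution of (LP) and `(u*, τ*)` is an
optimal solution of its dual (D), then setting
`p*^m = ∑_r ∑_{b∋m} x*_r(b) v_r^m(b) − u*^m` for each rider `m` makes `(x*, p*, τ*)` a market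
equilibrium.  Conversely, for any market equilibrium `(x*, p*, τ*)`, the trip vector `x*` is an
optimal solution of (LP) and the pair `(u*, τ*)`, where `u*` is the induced utility vector,
is an optimal solution of (D). -/
theorem equilibrium_from_primal_dual_optima (c : CarpoolMarket) :
    ((∀ x u τ, c.LPOptimal x → c.IsBinary x → c.DualOptimal u τ →
        c.IsEquilibrium x
          (fun m =>
            (∑ r : c.R, ∑ b ∈ c.Groups.filter (fun b => m ∈ b), x b r * c.riderValue m b r)
              - u m)
          τ) ∧
      (∀ x p τ, c.IsEquilibrium x p τ →
        c.LPOptimal x ∧ c.DualOptimal (c.utility x p) τ)) := by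
  refine ⟨fun x u τ hx hbin hd => ?_, fun x p τ h => ?_⟩
  · exact CarpoolMarket.isEquilibrium_of_complementarySlack ⟨hbin, hx.1⟩ hd.1
      ((hx.1.welfare_eq_dualObj_iff hd.1).mp (hx.welfare_eq_dualObj hd))
  · obtain ⟨hd, hcs⟩ := h.dualFeasible_and_complementarySlack
    exact h.1.2.optimal_of_welfare_eq_dualObj hd ((h.1.2.welfare_eq_dualObj_iff hd).mpr hcs)
end
end

section
/- An outcome (x*, p*, τ*) with induced utility vector u* is a market equilibrium if and only if all of the following hold: x* is a feasible {0,1}-valued solution of (LP); (u*, τ*) is a feasible solution of the dual (D); u*^m > 0 only if rider m belongs to some organized trip; τ*_e > 0 only if Σ_{r∋e} Σ_b x*_r(b) = q_e; and x*_r(b) = 1 only if Σ_{m∈b} u*^m + Σ_{e∈r} τ*_e = V_r(b). -/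
/-!
Along an organized trip `(b, r)` the rider constraints of (LP) force every other trip of each
`m ∈ b` to be empty, so `∑_{m∈b} u^m = ∑_{m∈b} v_r^m(b) - ∑_{m∈b} p^m`. Hence budget balance on
`(b, r)` is exactly tightness of the dual constraint there, stability is dual feasibility of
`(u, τ)`, and the two remaining equilibrium conditions are the complementary-slackness
conditions for `u ≥ 0` and for the capacity constraints, read contrapositively.
-/

open Classical
noncomputable section

theorem sum_mul_eq_of_sum_le_one {ι R : Type*} [Semiring R] [PartialOrder R]
    [IsOrderedCancelAddMonoid R] {s : Finset ι} {f : ι → R} (hf : ∀ j ∈ s, 0 ≤ f j)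
    (hsum : ∑ j ∈ s, f j ≤ 1) {i : ι} (hi : i ∈ s) (hfi : f i = 1) (g : ι → R) :
    ∑ j ∈ s, g j * f j = g i := by
  have hrest : ∑ j ∈ s.erase i, f j = 0 := by
    refine le_antisymm ?_ (Finset.sum_nonneg fun j hj => hf j (Finset.mem_of_mem_erase hj))
    rw [← Finset.add_sum_erase s f hi, hfi] at hsum
    exact le_of_add_le_add_left (a := (1 : R)) (by simpa using hsum)
  rw [Finset.sum_eq_zero_iff_of_nonneg fun j hj => hf j (Finset.mem_of_mem_erase hj)] at hrest
  rw [Finset.sum_eq_single_of_mem i hi fun j hj hji => by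
    rw [hrest j (Finset.mem_erase.2 ⟨hji, hj⟩), mul_zero], hfi, mul_one]

theorem eq_zero_of_lt_iff_eq_of_pos {α : Type*} [Zero α] [PartialOrder α] {a b t : α}
    (hab : a ≤ b) (ht : 0 ≤ t) : (a < b → t = 0) ↔ (0 < t → a = b) := by
  constructor
  · intro h htpos
    by_contra hne
    exact htpos.ne' (h (lt_of_le_of_ne hab hne))
  · intro h hlt
    by_contra hne
    exact hlt.ne (h (lt_of_le_of_ne ht (Ne.symm hne)))

namespace CarpoolMarket

variable {c : CarpoolMarket} {x : Finset c.M → c.R → ℝ} {p : c.M → ℝ}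

theorem LPFeasible.sum_trips_of_rider_eq (hx : c.LPFeasible x) {b : Finset c.M} {r : c.R}
    (hb : b ∈ c.Groups) (h1 : x b r = 1) {m : c.M} (hm : m ∈ b) (f : Finset c.M → c.R → ℝ) :
    ∑ r', ∑ b' ∈ c.Groups.filter (m ∈ ·), f b' r' * x b' r' = f b r := by
  obtain ⟨hnonneg, -, hrider, -⟩ := hx
  rw [← Finset.sum_product' (f := fun r' b' => f b' r' * x b' r')]
  exact sum_mul_eq_of_sum_le_one (f := fun q => x q.2 q.1) (fun q _ => hnonneg q.2 q.1)
    (by rw [Finset.sum_product' (f := fun r' b' => x b' r')]; exact hrider m)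
    (i := (r, b)) (Finset.mem_product.2 ⟨Finset.mem_univ r, Finset.mem_filter.2 ⟨hb, hm⟩⟩) h1
    (fun q => f q.2 q.1)

theorem LPFeasible.sum_utility_eq (hx : c.LPFeasible x) {b : Finset c.M} {r : c.R}
    (hb : b ∈ c.Groups) (h1 : x b r = 1) :
    ∑ m ∈ b, c.utility x p m = ∑ m ∈ b, c.riderValue m b r - ∑ m ∈ b, p m := by
  rw [← Finset.sum_sub_distrib]
  refine Finset.sum_congr rfl fun m hm => ?_
  rw [utility, hx.sum_trips_of_rider_eq hb h1 hm fun b' r' => c.riderValue m b' r']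

theorem LPFeasible.budget_balance_iff (hx : c.LPFeasible x) (τ : c.E → ℝ) {b : Finset c.M}
    {r : c.R} (hb : b ∈ c.Groups) (h1 : x b r = 1) :
    ∑ m ∈ b, p m = c.routeToll τ r + c.tripCost b r ↔
      ∑ m ∈ b, c.utility x p m + c.routeToll τ r = c.V b r := by
  rw [hx.sum_utility_eq hb h1, V]
  constructor <;> intro h <;> linarith

theorem utility_eq_neg_of_unserved {m : c.M} (hm : ∀ b r, m ∈ b → x b r = 0) :
    c.utility x p m = -p m := by
  rw [utility, Finset.sum_eq_zero fun r _ => Finset.sum_eq_zero fun b hb => by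
    rw [hm b r (Finset.mem_filter.1 hb).2, mul_zero], zero_sub]

theorem IsBinary.unserved_iff (hx : c.IsBinary x) (m : c.M) :
    (∀ b r, m ∈ b → x b r = 0) ↔ ¬∃ b r, m ∈ b ∧ x b r = 1 := by
  simp only [not_exists, not_and]
  exact forall₂_congr fun b r => imp_congr_right fun _ =>
    ⟨fun h => by simp [h], (hx b r).resolve_right⟩

theorem IsBinary.payment_eq_zero_of_unserved_iff (hx : c.IsBinary x) {m : c.M}
    (hu : 0 ≤ c.utility x p m) :
    ((∀ b r, m ∈ b → x b r = 0) → p m = 0) ↔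
      (0 < c.utility x p m → ∃ b r, m ∈ b ∧ x b r = 1) := by
  rw [hx.unserved_iff m]
  have hneg : (¬∃ b r, m ∈ b ∧ x b r = 1) → c.utility x p m = -p m :=
    fun hns => c.utility_eq_neg_of_unserved ((hx.unserved_iff m).2 hns)
  constructor
  · intro hfree hpos
    by_contra hns
    linarith [hneg hns, hfree hns]
  · intro hserved hns
    have hnonpos : ¬0 < c.utility x p m := fun hpos => hns (hserved hpos)
    linarith [hneg hns]

end CarpoolMarket

/-- An outcome `(x*, p*, τ*)` with induced utility vector `u*` is a market
equilibrium if and only if: `x*` is a feasible `{0,1}`-valued solution of (LP); `(u*, τ*)` is a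
feasible solution of the dual (D); `u*^m > 0` only if rider `m` belongs to some organized trip;
`τ*_e > 0` only if the load of `e` meets its capacity; and `x*_r(b) = 1` only if
`∑_{m∈b} u*^m + ∑_{e∈r} τ*_e = V_r(b)` (complementary slackness). -/
theorem equilibrium_iff_primal_dual_feasible_and_complementary_slackness
    (c : CarpoolMarket) (x : Finset c.M → c.R → ℝ) (p : c.M → ℝ) (τ : c.E → ℝ) :
    c.IsEquilibrium x p τ ↔
      (c.TripFeasible x ∧
       c.DualFeasible (c.utility x p) τ ∧
       (∀ m : c.M, 0 < c.utility x p m → ∃ b r, m ∈ b ∧ x b r = 1) ∧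
       (∀ e : c.E, 0 < τ e → c.edgeLoad x e = (c.q e : ℝ)) ∧
       (∀ b ∈ c.Groups, ∀ r : c.R, x b r = 1 →
          (∑ m ∈ b, c.utility x p m) + c.routeToll τ r = c.V b r)) := by
  constructor
  · rintro ⟨⟨hbin, hlp⟩, hτ, hu, hstable, hbudget, hfree, hclear⟩
    exact ⟨⟨hbin, hlp⟩, ⟨hu, hτ, fun b hb r => sub_le_iff_le_add.1 (hstable b hb r)⟩,
      fun m => (hbin.payment_eq_zero_of_unserved_iff (hu m)).1 (hfree m),
      fun e => (eq_zero_of_lt_iff_eq_of_pos (hlp.2.2.2 e) (hτ e)).1 (hclear e),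
      fun b hb r h1 => (hlp.budget_balance_iff τ hb h1).1 (hbudget b hb r h1)⟩
  · rintro ⟨⟨hbin, hlp⟩, ⟨hu, hτ, hdual⟩, hserved, htight, hslack⟩
    exact ⟨⟨hbin, hlp⟩, hτ, hu, fun b hb r => sub_le_iff_le_add.2 (hdual b hb r),
      fun b hb r h1 => (hlp.budget_balance_iff τ hb h1).2 (hslack b hb r h1),
      fun m => (hbin.payment_eq_zero_of_unserved_iff (hu m)).2 (hserved m),
      fun e => (eq_zero_of_lt_iff_eq_of_pos (hlp.2.2.2 e) (hτ e)).2 (htight e)⟩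
end
end
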